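/- arXiv:1912.13323 — 3 statements merged into one kernel-verified Lean document; each statement's English description precedes it below -/
import Mathlib

section
/- For the wheel W_n with n ≥ 4: χ_td(W_4) = 8; χ_td(W_5) = 7; χ_td(W_n) = n + 1 when n is even and n ≥ 6; and χ_td(W_n) = n when n is odd and n ≥ 7. -/
open SimpleGraph

/-- A `k`-total difference labeling of `G`: a proper vertex labeling `c` with labels in
`{1,…,k}` such that the induced edge label `|c u - c v|` of each edge differs from the
labels of its two incident vertices, and distinct edges sharing a vertex receive
distinct induced labels. -/
def IsTotalDiffLabeling {V : Type*} (G : SimpleGraph V) (k : ℕ) (c : V → ℕ) : Prop :=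
  (∀ v, 1 ≤ c v ∧ c v ≤ k) ∧
  (∀ u v, G.Adj u v → c u ≠ c v) ∧
  (∀ u v, G.Adj u v → Nat.dist (c u) (c v) ≠ c u ∧ Nat.dist (c u) (c v) ≠ c v) ∧
  (∀ u v w, G.Adj u v → G.Adj v w → u ≠ w →
    Nat.dist (c u) (c v) ≠ Nat.dist (c v) (c w))

/-- The total difference chromatic number of `G`: the least `k` for which `G` admits a
`k`-total difference labeling. -/
noncomputable def tdChromatic {V : Type*} (G : SimpleGraph V) : ℕ :=
  sInf {k | ∃ c : V → ℕ, IsTotalDiffLabeling G k c}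

/-- The wheel `W_n`: the hub `none` is adjacent to all `n - 1` vertices of the outer
cycle `C_{n-1}`. -/
def wheelGraph (n : ℕ) : SimpleGraph (Option (Fin (n - 1))) :=
  SimpleGraph.fromRel (fun u v =>
    u = none ∨ ∃ i j : Fin (n - 1), u = some i ∧ v = some j ∧ (cycleGraph (n - 1)).Adj i j)

/-! ### Adjacency facts for the wheel graph -/

/-!
At the hub of `W_n` the `n - 1` spoke differences `|c(hub) - c(v)|` are distinct values in
`{1, …, k - 1}`, so `k ≥ n`. If `k = n` they exhaust `{1, …, n - 1}`; none of them equals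
`c(hub)`, so `c(hub) = n`, and none equals `n / 2` (it would be the label of its rim endpoint),
so `n` is odd. Explicit labelings attain these bounds for `n ≥ 6`, and for `W₄`, `W₅` a finite
search rules out `k ≤ 7`, resp. `k ≤ 6`.
-/

open Finset

theorem tdChromatic_eq_of_forall_le {V : Type*} {G : SimpleGraph V} {k : ℕ}
    (hk : ∃ c, IsTotalDiffLabeling G k c)
    (hle : ∀ {k' c}, IsTotalDiffLabeling G k' c → k ≤ k') : tdChromatic G = k :=
  IsLeast.csInf_eq ⟨hk, fun _ ⟨_, hc⟩ => hle hc⟩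

namespace IsTotalDiffLabeling

variable {V : Type*} {G : SimpleGraph V} {k : ℕ} {c : V → ℕ}

theorem mono {k' : ℕ} (hc : IsTotalDiffLabeling G k c) (hk : k ≤ k') :
    IsTotalDiffLabeling G k' c :=
  ⟨fun v => ⟨(hc.1 v).1, (hc.1 v).2.trans hk⟩, hc.2⟩

theorem dist_mem_Icc (hc : IsTotalDiffLabeling G k c) {u v : V} (h : G.Adj v u) :
    Nat.dist (c v) (c u) ∈ Icc 1 (k - 1) := by
  have hu := hc.1 u
  have hv := hc.1 v
  have hne := hc.2.1 v u h
  rw [mem_Icc]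
  unfold Nat.dist
  omega

theorem injOn_dist (hc : IsTotalDiffLabeling G k c) {v : V} {s : Finset V}
    (hs : ∀ u ∈ s, G.Adj v u) : Set.InjOn (fun u => Nat.dist (c v) (c u)) s := by
  intro u hu w hw h
  by_contra hne
  exact hc.2.2.2 u v w (hs u hu).symm (hs w hw) hne (Nat.dist_comm (c u) (c v) ▸ h)

theorem card_lt (hc : IsTotalDiffLabeling G k c) {v : V} {s : Finset V}
    (hs : ∀ u ∈ s, G.Adj v u) : #s < k := by
  have hcard := card_le_card_of_injOn _ (fun u hu => hc.dist_mem_Icc (hs u hu)) (hc.injOn_dist hs)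
  have hv := hc.1 v
  rw [Nat.card_Icc] at hcard
  omega

theorem exists_mem_Icc_forall_dist_ne (hc : IsTotalDiffLabeling G k c) (hk : Even k) (v : V) :
    ∃ b ∈ Icc 1 (k - 1), ∀ u, G.Adj v u → Nat.dist (c v) (c u) ≠ b := by
  obtain ⟨hv1, hvk⟩ := hc.1 v
  rcases hvk.lt_or_eq with hvk | hvk
  · exact ⟨c v, mem_Icc.2 ⟨hv1, by omega⟩, fun u h => (hc.2.2.1 v u h).1⟩
  · obtain ⟨r, rfl⟩ := hk
    refine ⟨r, mem_Icc.2 ⟨by omega, by omega⟩, fun u h hdist => (hc.2.2.1 v u h).2 ?_⟩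
    have hu := (hc.1 u).2
    unfold Nat.dist at hdist ⊢
    omega

theorem card_add_one_lt_of_even (hc : IsTotalDiffLabeling G k c) (hk : Even k) {v : V}
    {s : Finset V} (hs : ∀ u ∈ s, G.Adj v u) : #s + 1 < k := by
  obtain ⟨b, hb, hvb⟩ := hc.exists_mem_Icc_forall_dist_ne hk v
  have hcard := card_le_card_of_injOn _
    (fun u hu => mem_erase.2 ⟨hvb u (hs u hu), hc.dist_mem_Icc (hs u hu)⟩) (hc.injOn_dist hs)
  rw [card_erase_of_mem hb, Nat.card_Icc] at hcard
  have := mem_Icc.1 hb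
  omega

end IsTotalDiffLabeling

theorem wheelGraph_adj_none_some {n : ℕ} (i : Fin (n - 1)) : (wheelGraph n).Adj none (some i) :=
  ⟨by simp, .inl (.inl rfl)⟩

theorem wheelGraph_adj_some_some {n : ℕ} {i j : Fin (n - 1)} :
    (wheelGraph n).Adj (some i) (some j) ↔ (cycleGraph (n - 1)).Adj i j := by
  simp only [wheelGraph, fromRel_adj, ne_eq, Option.some.injEq, reduceCtorEq, false_or,
    exists_and_left, exists_eq_left']
  exact ⟨fun ⟨_, h⟩ => h.elim id (·.symm), fun h => ⟨h.ne, .inl h⟩⟩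

theorem IsTotalDiffLabeling.le_of_wheelGraph {n k : ℕ} {c : Option (Fin (n - 1)) → ℕ}
    (hc : IsTotalDiffLabeling (wheelGraph n) k c) : n ≤ k := by
  have := hc.card_lt (v := none) (s := univ.map .some) (by simp [wheelGraph_adj_none_some])
  rw [card_map, card_univ, Fintype.card_fin] at this
  omega

theorem IsTotalDiffLabeling.lt_of_wheelGraph_of_even {n k : ℕ} {c : Option (Fin (n - 1)) → ℕ}
    (hc : IsTotalDiffLabeling (wheelGraph n) k c) (hn : Even n) : n < k := by
  refine hc.le_of_wheelGraph.lt_of_ne fun hnk => ?_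
  have := hc.card_add_one_lt_of_even (hnk ▸ hn) (v := none) (s := univ.map .some)
    (by simp [wheelGraph_adj_none_some])
  rw [card_map, card_univ, Fintype.card_fin] at this
  omega

theorem cycleGraph_adj_iff_eq_add_one {m : ℕ} {i j : Fin (m + 2)} :
    (cycleGraph (m + 2)).Adj i j ↔ j = i + 1 ∨ i = j + 1 := by
  rw [cycleGraph_adj, sub_eq_iff_eq_add', sub_eq_iff_eq_add', or_comm]

theorem wheelGraph_adj_some_some_iff {m : ℕ} {i j : Fin (m + 3)} :
    (wheelGraph (m + 4)).Adj (some i) (some j) ↔ j = i + 1 ∨ i = j + 1 :=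
  wheelGraph_adj_some_some.trans cycleGraph_adj_iff_eq_add_one

/-- Hub label `a`, rim labels `x` along the cycle `0 → 1 → ⋯ → m + 2 → 0` of `W_{m+4}`. -/
def IsWheelLabeling (m k a : ℕ) (x : Fin (m + 3) → ℕ) : Prop :=
  (1 ≤ a ∧ a ≤ k) ∧
  (∀ i, ((1 ≤ x i ∧ x i ≤ k) ∧ x i ≠ a ∧ (Nat.dist a (x i) ≠ a ∧ Nat.dist a (x i) ≠ x i)) ∧
    (x i ≠ x (i + 1) ∧
      (Nat.dist (x i) (x (i + 1)) ≠ x i ∧ Nat.dist (x i) (x (i + 1)) ≠ x (i + 1)) ∧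
      (Nat.dist (x i) (x (i + 1)) ≠ Nat.dist a (x i) ∧
        Nat.dist (x i) (x (i + 1)) ≠ Nat.dist a (x (i + 1)))) ∧
    Nat.dist (x i) (x (i + 1)) ≠ Nat.dist (x (i + 1)) (x (i + 1 + 1))) ∧
  Function.Injective fun i => Nat.dist a (x i)

instance {m k a : ℕ} {x : Fin (m + 3) → ℕ} : Decidable (IsWheelLabeling m k a x) := by
  unfold IsWheelLabeling
  infer_instance

namespace IsWheelLabeling

variable {m k a : ℕ} {x : Fin (m + 3) → ℕ}

theorem spoke (h : IsWheelLabeling m k a x) (i : Fin (m + 3)) :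
    (1 ≤ x i ∧ x i ≤ k) ∧ x i ≠ a ∧ (Nat.dist a (x i) ≠ a ∧ Nat.dist a (x i) ≠ x i) :=
  (h.2.1 i).1

theorem rim_edge (h : IsWheelLabeling m k a x) {i j : Fin (m + 3)}
    (hij : (wheelGraph (m + 4)).Adj (some i) (some j)) :
    x i ≠ x j ∧ (Nat.dist (x i) (x j) ≠ x i ∧ Nat.dist (x i) (x j) ≠ x j) ∧
      (Nat.dist (x i) (x j) ≠ Nat.dist a (x i) ∧ Nat.dist (x i) (x j) ≠ Nat.dist a (x j)) := by
  rcases wheelGraph_adj_some_some_iff.1 hij with rfl | rfl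
  · exact (h.2.1 i).2.1
  · obtain ⟨hne, hd, ha⟩ := (h.2.1 j).2.1
    rw [Nat.dist_comm]
    exact ⟨hne.symm, hd.symm, ha.symm⟩

theorem rim_path (h : IsWheelLabeling m k a x) {i j l : Fin (m + 3)}
    (hij : (wheelGraph (m + 4)).Adj (some i) (some j))
    (hjl : (wheelGraph (m + 4)).Adj (some j) (some l)) (hil : i ≠ l) :
    Nat.dist (x i) (x j) ≠ Nat.dist (x j) (x l) := by
  rcases wheelGraph_adj_some_some_iff.1 hij with rfl | rfl <;>
    rcases wheelGraph_adj_some_some_iff.1 hjl with rfl | hj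
  · exact (h.2.1 i).2.2
  · exact absurd (add_right_cancel hj) hil
  · exact absurd rfl hil
  · subst hj
    rw [Nat.dist_comm (x (l + 1 + 1)), Nat.dist_comm (x (l + 1)) (x l)]
    exact (h.2.1 l).2.2.symm

end IsWheelLabeling

theorem isTotalDiffLabeling_wheelGraph_iff {m k : ℕ} {c : Option (Fin (m + 3)) → ℕ} :
    IsTotalDiffLabeling (wheelGraph (m + 4)) k c ↔
      IsWheelLabeling m k (c none) (fun i => c (some i)) := by
  constructor
  · rintro ⟨hmem, hne, hdist, hpath⟩
    have hub := wheelGraph_adj_none_some (n := m + 4)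
    have rim (i : Fin (m + 3)) : (wheelGraph (m + 4)).Adj (some i) (some (i + 1 : Fin (m + 3))) :=
      wheelGraph_adj_some_some_iff.2 (.inl rfl)
    have ne_add_two (i : Fin (m + 3)) : i ≠ i + 1 + 1 := by
      rw [Ne, add_assoc, left_eq_add, Fin.ext_iff, Fin.val_add, Fin.val_one, Fin.val_zero,
        Nat.mod_eq_of_lt] <;> omega
    refine ⟨hmem none, fun i => ⟨⟨hmem (some i), (hne _ _ (hub i)).symm, hdist _ _ (hub i)⟩,
      ⟨hne _ _ (rim i), hdist _ _ (rim i), ?_, ?_⟩, ?_⟩, fun i j h => ?_⟩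
    · exact (hpath _ _ _ (hub i) (rim i) (by simp)).symm
    · rw [Nat.dist_comm (c none)]
      exact hpath _ _ _ (rim i) (hub _).symm (by simp)
    · exact hpath _ _ _ (rim i) (rim (i + 1)) (by simpa using ne_add_two i)
    · by_contra hij
      refine hpath _ _ _ (hub i).symm (hub j) (by simpa using hij) ?_
      rwa [Nat.dist_comm]
  · intro h
    refine ⟨?_, ?_, ?_, ?_⟩
    · rintro (_ | i)
      exacts [h.1, (h.spoke i).1]
    · rintro (_ | i) (_ | j) hadj
      · exact absurd hadj (wheelGraph _).irrefl
      · exact (h.spoke j).2.1.symm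
      · exact (h.spoke i).2.1
      · exact (h.rim_edge hadj).1
    · rintro (_ | i) (_ | j) hadj
      · exact absurd hadj (wheelGraph _).irrefl
      · exact (h.spoke j).2.2
      · rw [Nat.dist_comm]
        exact (h.spoke i).2.2.symm
      · exact (h.rim_edge hadj).2.1
    · rintro (_ | i) (_ | j) (_ | l) huv hvw hne
      · exact absurd huv (wheelGraph _).irrefl
      · exact absurd huv (wheelGraph _).irrefl
      · exact absurd rfl hne
      · exact (h.rim_edge hvw).2.2.1.symm
      · exact absurd hvw (wheelGraph _).irrefl
      · refine fun hd => hne (congrArg some (h.2.2 ?_))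
        simpa only [Nat.dist_comm _ (c none)] using hd
      · rw [Nat.dist_comm _ (c none)]
        exact (h.rim_edge huv).2.2.2
      · exact h.rim_path huv hvw fun hil => hne (congrArg some hil)

theorem IsWheelLabeling.isTotalDiffLabeling {m k a : ℕ} {x : Fin (m + 3) → ℕ}
    (h : IsWheelLabeling m k a x) :
    IsTotalDiffLabeling (wheelGraph (m + 4)) k (fun v => v.elim a x) :=
  isTotalDiffLabeling_wheelGraph_iff.2 h

theorem Fin.val_add_one_eq_ite {n : ℕ} [NeZero n] (i : Fin n) :
    ((i + 1 : Fin n) : ℕ) = if (i : ℕ) + 1 = n then 0 else (i : ℕ) + 1 := by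
  rw [Fin.val_add, Fin.val_one', Nat.add_mod_mod]
  split_ifs with h
  · rw [h, Nat.mod_self]
  · exact Nat.mod_eq_of_lt (by omega)

theorem Fin.val_add_one_add_one_cases {n : ℕ} (i : Fin (n + 2)) :
    ((i : ℕ) + 2 < n + 2 ∧ ((i + 1 : Fin (n + 2)) : ℕ) = i + 1 ∧
        ((i + 1 + 1 : Fin (n + 2)) : ℕ) = i + 2) ∨
      ((i : ℕ) = n ∧ ((i + 1 : Fin (n + 2)) : ℕ) = n + 1 ∧ ((i + 1 + 1 : Fin (n + 2)) : ℕ) = 0) ∨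
      ((i : ℕ) = n + 1 ∧ ((i + 1 : Fin (n + 2)) : ℕ) = 0 ∧
        ((i + 1 + 1 : Fin (n + 2)) : ℕ) = 1) := by
  have h₁ := Fin.val_add_one_eq_ite i
  have h₂ := Fin.val_add_one_eq_ite (i + 1)
  have := i.isLt
  split_ifs at h₁ h₂ <;> omega

/-- Rim labels `3, 4, 6, 5, 8, 7, …, m + 4, m + 3, m + 5`, for the hub label `1`. -/
def evenWheelRim (m : ℕ) (i : Fin (m + 3)) : ℕ :=
  if (i : ℕ) = 0 then 3 else if (i : ℕ) = 1 then 4 else if (i : ℕ) = m + 2 then m + 5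
  else if (i : ℕ) % 2 = 0 then i + 4 else i + 2

/-- Rim labels `1, 3, 2, 5, 4, …, m + 2, m + 1, m + 3`, for the hub label `m + 4`. -/
def oddWheelRim (m : ℕ) (i : Fin (m + 3)) : ℕ :=
  if (i : ℕ) = 0 then 1 else if (i : ℕ) = m + 2 then m + 3
  else if (i : ℕ) % 2 = 1 then i + 2 else i

theorem isWheelLabeling_evenWheelRim {m : ℕ} (hm : Even m) (h2m : 2 ≤ m) :
    IsWheelLabeling m (m + 5) 1 (evenWheelRim m) := by
  obtain ⟨r, rfl⟩ := hm
  refine ⟨by omega, fun i => ?_, fun i j hij => Fin.ext ?_⟩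
  · rcases Fin.val_add_one_add_one_cases i with ⟨hi, h₁, h₂⟩ | ⟨hi, h₁, h₂⟩ | ⟨hi, h₁, h₂⟩ <;>
      simp only [evenWheelRim, h₁, h₂, Nat.dist] <;> split_ifs <;> first | omega | contradiction
  · have := i.isLt
    have := j.isLt
    simp only [evenWheelRim, Nat.dist] at hij
    split_ifs at hij <;> omega

theorem isWheelLabeling_oddWheelRim {m : ℕ} (hm : Odd m) (h3m : 3 ≤ m) :
    IsWheelLabeling m (m + 4) (m + 4) (oddWheelRim m) := by
  obtain ⟨r, rfl⟩ := hm
  refine ⟨by omega, fun i => ?_, fun i j hij => Fin.ext ?_⟩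
  · rcases Fin.val_add_one_add_one_cases i with ⟨hi, h₁, h₂⟩ | ⟨hi, h₁, h₂⟩ | ⟨hi, h₁, h₂⟩ <;>
      simp only [oddWheelRim, h₁, h₂, Nat.dist] <;> split_ifs <;> first | omega | contradiction
  · have := i.isLt
    have := j.isLt
    simp only [oddWheelRim, Nat.dist] at hij
    split_ifs at hij <;> omega

theorem isWheelLabeling_zero_eight : IsWheelLabeling 0 8 1 ![3, 7, 8] := by decide

theorem isWheelLabeling_one_seven : IsWheelLabeling 1 7 1 ![3, 4, 6, 7] := by decide

theorem not_isWheelLabeling_zero_seven {a : ℕ} {x : Fin 3 → ℕ} : ¬IsWheelLabeling 0 7 a x := by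
  have search : ∀ a < 8, ∀ x₀ < 8, ∀ x₁ < 8, ∀ x₂ < 8, ¬IsWheelLabeling 0 7 a ![x₀, x₁, x₂] := by
    decide +kernel
  intro h
  have hx (i : Fin 3) : x i < 8 := Nat.lt_succ_of_le (h.spoke i).1.2
  refine search a (Nat.lt_succ_of_le h.1.2) _ (hx 0) _ (hx 1) _ (hx 2) ?_
  convert h using 1
  ext i
  fin_cases i <;> rfl

theorem not_isWheelLabeling_one_six {a : ℕ} {x : Fin 4 → ℕ} : ¬IsWheelLabeling 1 6 a x := by
  have search : ∀ a < 7, ∀ x₀ < 7, ∀ x₁ < 7, ∀ x₂ < 7, ∀ x₃ < 7,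
      ¬IsWheelLabeling 1 6 a ![x₀, x₁, x₂, x₃] := by
    decide +kernel
  intro h
  have hx (i : Fin 4) : x i < 7 := Nat.lt_succ_of_le (h.spoke i).1.2
  refine search a (Nat.lt_succ_of_le h.1.2) _ (hx 0) _ (hx 1) _ (hx 2) _ (hx 3) ?_
  convert h using 1
  ext i
  fin_cases i <;> rfl

/-- Total difference chromatic numbers of wheels: `χ_td(W₄) = 8`, `χ_td(W₅) = 7`,
`χ_td(W_n) = n + 1` for even `n ≥ 6`, and `χ_td(W_n) = n` for odd `n ≥ 7`. -/
theorem tdChromatic_wheelGraph :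
    tdChromatic (wheelGraph 4) = 8 ∧
    tdChromatic (wheelGraph 5) = 7 ∧
    (∀ n : ℕ, Even n → 6 ≤ n → tdChromatic (wheelGraph n) = n + 1) ∧
    (∀ n : ℕ, Odd n → 7 ≤ n → tdChromatic (wheelGraph n) = n) := by
  refine ⟨?_, ?_, fun n hn hn6 => ?_, fun n hn hn7 => ?_⟩
  · refine tdChromatic_eq_of_forall_le ⟨_, isWheelLabeling_zero_eight.isTotalDiffLabeling⟩
      fun hc => ?_
    by_contra! hk
    exact not_isWheelLabeling_zero_seven (isTotalDiffLabeling_wheelGraph_iff.1 (hc.mono (by omega)))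
  · refine tdChromatic_eq_of_forall_le ⟨_, isWheelLabeling_one_seven.isTotalDiffLabeling⟩
      fun hc => ?_
    by_contra! hk
    exact not_isWheelLabeling_one_six (isTotalDiffLabeling_wheelGraph_iff.1 (hc.mono (by omega)))
  · obtain ⟨m, rfl⟩ : ∃ m, n = m + 4 := ⟨n - 4, by omega⟩
    have hm : Even m := (Nat.even_add.1 hn).2 (by decide)
    have hc := (isWheelLabeling_evenWheelRim hm (by omega)).isTotalDiffLabeling
    exact tdChromatic_eq_of_forall_le ⟨_, hc⟩ fun hc' => hc'.lt_of_wheelGraph_of_even hn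
  · obtain ⟨m, rfl⟩ : ∃ m, n = m + 4 := ⟨n - 4, by omega⟩
    have hm : Odd m := (Nat.odd_add.1 hn).2 (by decide)
    have hc := (isWheelLabeling_oddWheelRim hm (by omega)).isTotalDiffLabeling
    exact tdChromatic_eq_of_forall_le ⟨_, hc⟩ fun hc' => hc'.le_of_wheelGraph
end

section
/- If G is a caterpillar with maximum degree Δ, then Δ + 1 ≤ χ_td(G) ≤ Δ + 3. -/
open SimpleGraph

/-- A caterpillar: a tree in which every vertex is at distance at most `1` from a
central path `p 0, p 1, …, p (n-1)`. -/
def IsCaterpillar {V : Type*} (G : SimpleGraph V) : Prop :=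
  G.IsTree ∧ ∃ (n : ℕ) (p : Fin n → V), Function.Injective p ∧
    (∀ i : Fin n, ∀ h : (i : ℕ) + 1 < n, G.Adj (p i) (p ⟨(i : ℕ) + 1, h⟩)) ∧
    (∀ v : V, ∃ i : Fin n, v = p i ∨ G.Adj v (p i))

/-!
At a vertex `v`, a `k`-total difference labeling sends the neighbours of `v` injectively to
differences in `{1, …, k - 1}`, so `Δ < χ_td`.

For the upper bound take `k = Δ + 3`. Label the central path `p 0, p 1, …` periodically by
`1, k, 2, k - 1` (by `1, 5, 4` when `k = 5`), and give the leaves hanging at `p i` labels whose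
differences to `p i` avoid the two differences along the path at `p i` and each other; the three
spare labels leave room for this. In a tree every edge is a bridge, so there are no other edges:
the path has no chords, leaves are pairwise non-adjacent and each leaf hangs at one path vertex.
-/

open Finset

namespace IsTotalDiffLabeling

variable {V : Type*} {G : SimpleGraph V} {k : ℕ} {c : V → ℕ}

lemma degree_lt (h : IsTotalDiffLabeling G k c) (v : V) [Fintype (G.neighborSet v)] :
    G.degree v < k := by
  obtain ⟨hbd, hne, -, hdist⟩ := h
  have hmaps : ∀ u ∈ G.neighborFinset v, Nat.dist (c u) (c v) ∈ Icc 1 (k - 1) := by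
    intro u hu
    have := hne u v ((mem_neighborFinset _ _ _).mp hu).symm
    have := hbd u
    have := hbd v
    rw [mem_Icc]
    unfold Nat.dist
    omega
  have hinj : Set.InjOn (fun u => Nat.dist (c u) (c v)) (G.neighborFinset v) := by
    intro u hu w hw h
    by_contra huw
    rw [mem_coe, mem_neighborFinset] at hu hw
    exact hdist u v w hu.symm hw huw (by rwa [Nat.dist_comm (c v)])
  have hcard := card_le_card_of_injOn _ hmaps hinj
  rw [Nat.card_Icc, card_neighborFinset_eq_degree] at hcard
  have := hbd v
  omega

lemma maxDegree_lt [Fintype V] [DecidableRel G.Adj] [Nonempty V]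
    (h : IsTotalDiffLabeling G k c) : G.maxDegree < k := by
  obtain ⟨v, hv⟩ := G.exists_maximal_degree_vertex
  exact hv ▸ h.degree_lt v

lemma tdChromatic_le (h : IsTotalDiffLabeling G k c) : tdChromatic G ≤ k :=
  Nat.sInf_le ⟨c, h⟩

lemma maxDegree_lt_tdChromatic [Fintype V] [DecidableRel G.Adj] [Nonempty V]
    (h : IsTotalDiffLabeling G k c) : G.maxDegree < tdChromatic G := by
  have hne : {k | ∃ c : V → ℕ, IsTotalDiffLabeling G k c}.Nonempty := ⟨k, c, h⟩
  obtain ⟨c', hc'⟩ := Nat.sInf_mem hne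
  exact hc'.maxDegree_lt

end IsTotalDiffLabeling

def DiffCompatible (a b : ℕ) : Prop := a ≠ b ∧ Nat.dist a b ≠ a ∧ Nat.dist a b ≠ b

lemma DiffCompatible.symm {a b : ℕ} (h : DiffCompatible a b) : DiffCompatible b a := by
  obtain ⟨hne, ha, hb⟩ := h
  exact ⟨hne.symm, Nat.dist_comm a b ▸ hb, Nat.dist_comm a b ▸ ha⟩

def spineLabel (k r : ℕ) : ℕ :=
  if k = 5 then (if r % 3 = 0 then 1 else if r % 3 = 1 then 5 else 4)
  else (if r % 4 = 0 then 1 else if r % 4 = 1 then k else if r % 4 = 2 then 2 else k - 1)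

-- The label of the `j`-th leaf at spine position `r`. The values skipped would give a difference
-- to the spine label equal to one of the two labels or to a difference along the spine.
def leafLabel (k r j : ℕ) : ℕ :=
  if k = 5 then (if r % 3 = 0 then 3 + j else if r % 3 = 1 then 3 else 1)
  else (if r % 4 = 0 then 3 + j
    else if r % 4 = 1 then k - (if 2 * (j + 1) < k then j + 1 else j + 2)
    else if r % 4 = 2 then (if j = 0 then 3 else j + 4)
    else k - 1 - (if 2 * (j + 1) < k - 1 then j + 1 else if j + 2 < k - 3 then j + 2 else j + 3))

section SpinePattern

-- `min r 1 + min (n - r - 1) 1` is the number of neighbours of `r` on the path `0, 1, …, n - 1`.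

variable {k n r j j' : ℕ}

lemma spineLabel_mem (hk : 2 ≤ k) : 1 ≤ spineLabel k r ∧ spineLabel k r ≤ k := by
  unfold spineLabel; split_ifs <;> omega

lemma diffCompatible_spineLabel_succ (hk : 4 ≤ k) (hk5 : 0 < r → 5 ≤ k) :
    DiffCompatible (spineLabel k r) (spineLabel k (r + 1)) := by
  unfold DiffCompatible spineLabel Nat.dist; split_ifs <;> omega

lemma spineLabel_dist_pred_ne_succ (hk : 5 ≤ k) (hr : 0 < r) :
    Nat.dist (spineLabel k (r - 1)) (spineLabel k r) ≠
      Nat.dist (spineLabel k (r + 1)) (spineLabel k r) := by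
  unfold spineLabel Nat.dist; split_ifs <;> omega

lemma leafLabel_mem_and_compatible (hj : j + 4 + min r 1 + min (n - r - 1) 1 ≤ k) :
    (1 ≤ leafLabel k r j ∧ leafLabel k r j ≤ k) ∧
      DiffCompatible (leafLabel k r j) (spineLabel k r) := by
  unfold DiffCompatible leafLabel spineLabel Nat.dist; split_ifs <;> omega

lemma leafLabel_dist_ne_pred (hr : 0 < r) (hj : j + 4 + min r 1 + min (n - r - 1) 1 ≤ k) :
    Nat.dist (leafLabel k r j) (spineLabel k r) ≠
      Nat.dist (spineLabel k (r - 1)) (spineLabel k r) := by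
  unfold leafLabel spineLabel Nat.dist; split_ifs <;> omega

lemma leafLabel_dist_ne_succ (hr : r + 1 < n) (hj : j + 4 + min r 1 + min (n - r - 1) 1 ≤ k) :
    Nat.dist (leafLabel k r j) (spineLabel k r) ≠
      Nat.dist (spineLabel k (r + 1)) (spineLabel k r) := by
  unfold leafLabel spineLabel Nat.dist; split_ifs <;> omega

lemma leafLabel_dist_injective (hj : j + 4 + min r 1 + min (n - r - 1) 1 ≤ k)
    (hj' : j' + 4 + min r 1 + min (n - r - 1) 1 ≤ k) (hne : j ≠ j') :
    Nat.dist (leafLabel k r j) (spineLabel k r) ≠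
      Nat.dist (leafLabel k r j') (spineLabel k r) := by
  unfold leafLabel spineLabel Nat.dist; split_ifs <;> omega

end SpinePattern

-- The neighbours of spine position `i` sit in slots: slot `0` is the previous spine vertex, slot `1`
-- the next one, slot `j + 2` the `j`-th leaf. `IsSlot n i ℓ s` says that slot `s` is occupied when
-- position `i` of an `n`-vertex spine carries `ℓ` leaves.
def nbrLabel (k i : ℕ) : ℕ → ℕ
  | 0 => spineLabel k (i - 1)
  | 1 => spineLabel k (i + 1)
  | j + 2 => leafLabel k i j

def IsSlot (n i ℓ s : ℕ) : Prop := (s = 0 → 0 < i) ∧ (s = 1 → i + 1 < n) ∧ s < ℓ + 2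

section Slots

variable {k n i ℓ s s' : ℕ}

lemma nbrLabel_mem_and_compatible (hs : IsSlot n i ℓ s) (hi : i < n)
    (hk : min i 1 + min (n - i - 1) 1 + ℓ + 3 ≤ k) (hk5 : 3 ≤ n → 5 ≤ k) :
    (1 ≤ nbrLabel k i s ∧ nbrLabel k i s ≤ k) ∧
      DiffCompatible (nbrLabel k i s) (spineLabel k i) := by
  obtain ⟨h0, h1, hℓ⟩ := hs
  rcases s with _ | _ | j
  · have hi0 := h0 rfl
    refine ⟨spineLabel_mem (by omega), ?_⟩
    have := diffCompatible_spineLabel_succ (k := k) (r := i - 1) (by omega)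
      (fun _ => hk5 (by omega))
    rwa [Nat.sub_add_cancel hi0] at this
  · have hi1 := h1 rfl
    exact ⟨spineLabel_mem (by omega),
      (diffCompatible_spineLabel_succ (by omega) (fun _ => by omega)).symm⟩
  · exact leafLabel_mem_and_compatible (n := n) (by omega)

lemma nbrLabel_dist_injective (hs : IsSlot n i ℓ s) (hs' : IsSlot n i ℓ s')
    (hk : min i 1 + min (n - i - 1) 1 + ℓ + 3 ≤ k) (hne : s ≠ s') :
    Nat.dist (nbrLabel k i s) (spineLabel k i) ≠ Nat.dist (nbrLabel k i s') (spineLabel k i) := by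
  wlog hlt : s < s' generalizing s s'
  · exact (this hs' hs hne.symm (by omega)).symm
  obtain ⟨h0, h1, hℓ⟩ := hs
  obtain ⟨-, h1', hℓ'⟩ := hs'
  rcases s with _ | _ | j <;> rcases s' with _ | _ | j' <;> try omega
  · exact spineLabel_dist_pred_ne_succ (by have := h0 rfl; have := h1' rfl; omega) (h0 rfl)
  · exact (leafLabel_dist_ne_pred (n := n) (h0 rfl) (by omega)).symm
  · exact (leafLabel_dist_ne_succ (h1 rfl) (by omega)).symm
  · exact leafLabel_dist_injective (n := n) (by omega) (by omega) (by omega)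

end Slots

namespace Fin

variable {n : ℕ}

lemma min_one_le_card_succ_eq (i : Fin n) :
    min i.val 1 ≤ #{t : Fin n | t.val + 1 = i.val} := by
  rcases Nat.eq_zero_or_pos i.val with h | h
  · simp [h]
  · exact (min_le_right _ _).trans (card_pos.mpr ⟨⟨i - 1, by omega⟩, by simp; omega⟩)

lemma min_one_le_card_eq_succ (i : Fin n) :
    min (n - i.val - 1) 1 ≤ #{t : Fin n | i.val + 1 = t.val} := by
  rcases Nat.lt_or_ge (i.val + 1) n with h | h
  · exact (min_le_right _ _).trans (card_pos.mpr ⟨⟨i + 1, h⟩, by simp⟩)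
  · simp [show n - i.val - 1 = 0 by omega]

end Fin

namespace SimpleGraph

variable {V : Type*} {G : SimpleGraph V} {n : ℕ} {p : Fin n → V}

def ConsecutiveAdj (G : SimpleGraph V) (p : Fin n → V) : Prop :=
  ∀ (i : Fin n) (h : i.val + 1 < n), G.Adj (p i) (p ⟨i + 1, h⟩)

lemma ConsecutiveAdj.adj_of_succ_eq (hadj : ConsecutiveAdj G p) {a b : Fin n}
    (h : a.val + 1 = b.val) : G.Adj (p a) (p b) := by
  have hab := hadj a (h ▸ b.isLt)
  rwa [show (⟨a + 1, _⟩ : Fin n) = b from Fin.ext h] at hab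

lemma ConsecutiveAdj.reachable (hadj : ConsecutiveAdj G p) (a b : Fin n) :
    G.Reachable (p a) (p b) :=
  let φ : pathGraph n →g G := ⟨p, fun hxy => (pathGraph_adj.mp hxy).elim
    hadj.adj_of_succ_eq (fun h => (hadj.adj_of_succ_eq h).symm)⟩
  (pathGraph_preconnected n a b).map φ

lemma ConsecutiveAdj.reachable_deleteEdges (hadj : ConsecutiveAdj G p) {e : Sym2 V}
    (he : ∀ (i : Fin n) (h : i.val + 1 < n), s(p i, p ⟨i + 1, h⟩) ≠ e) (a b : Fin n) :
    (G.deleteEdges {e}).Reachable (p a) (p b) :=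
  ConsecutiveAdj.reachable (fun i h => by simp [hadj i h, he i h]) a b

lemma ConsecutiveAdj.reachable_deleteEdges_of_notMem_range (hadj : ConsecutiveAdj G p) {v : V}
    (hv : v ∉ Set.range p) (w : V) (a b : Fin n) :
    (G.deleteEdges {s(v, w)}).Reachable (p a) (p b) :=
  hadj.reachable_deleteEdges (fun i _ h => by
    rcases Sym2.eq_iff.mp h with ⟨h, -⟩ | ⟨-, h⟩ <;> exact hv ⟨_, h⟩) a b

lemma IsAcyclic.not_reachable_deleteEdges (hG : G.IsAcyclic) {u v : V} (h : G.Adj u v) :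
    ¬ (G.deleteEdges {s(u, v)}).Reachable u v :=
  isBridge_iff.mp (isAcyclic_iff_forall_adj_isBridge.mp hG h)

structure IsCaterpillarSpine (G : SimpleGraph V) (p : Fin n → V) : Prop where
  isAcyclic : G.IsAcyclic
  injective : Function.Injective p
  consecutiveAdj : ConsecutiveAdj G p
  exists_adj_of_notMem_range : ∀ v ∉ Set.range p, ∃ i, G.Adj v (p i)

namespace IsCaterpillarSpine

lemma succ_eq_or_of_adj (hp : IsCaterpillarSpine G p) {a b : Fin n} (h : G.Adj (p a) (p b)) :
    a.val + 1 = b.val ∨ b.val + 1 = a.val := by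
  by_contra hab
  refine hp.isAcyclic.not_reachable_deleteEdges h
    (hp.consecutiveAdj.reachable_deleteEdges (fun i hi => ?_) a b)
  simp only [ne_eq, Sym2.eq_iff, hp.injective.eq_iff, Fin.ext_iff]
  omega

lemma eq_of_adj_of_notMem_range (hp : IsCaterpillarSpine G p) {v : V} (hv : v ∉ Set.range p)
    {a b : Fin n} (ha : G.Adj v (p a)) (hb : G.Adj v (p b)) : a = b := by
  by_contra hab
  have hva : (G.deleteEdges {s(v, p b)}).Adj v (p a) := by
    simpa [ha, hp.injective.eq_iff] using ⟨hab, fun h => absurd ⟨b, h.symm⟩ hv⟩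
  exact hp.isAcyclic.not_reachable_deleteEdges hb <| hva.reachable.trans <|
    hp.consecutiveAdj.reachable_deleteEdges_of_notMem_range hv _ a b

lemma mem_range_or_mem_range_of_adj (hp : IsCaterpillarSpine G p) {v w : V} (h : G.Adj v w) :
    v ∈ Set.range p ∨ w ∈ Set.range p := by
  by_contra! ⟨hv, hw⟩
  obtain ⟨a, ha⟩ := hp.exists_adj_of_notMem_range v hv
  obtain ⟨b, hb⟩ := hp.exists_adj_of_notMem_range w hw
  have hva : (G.deleteEdges {s(v, w)}).Adj v (p a) := by
    refine deleteEdges_adj.mpr ⟨ha, fun he => ?_⟩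
    rcases Sym2.eq_iff.mp he with ⟨-, h⟩ | ⟨-, h⟩
    exacts [hw ⟨a, h⟩, hv ⟨a, h⟩]
  have hbw : (G.deleteEdges {s(v, w)}).Adj (p b) w := by
    refine deleteEdges_adj.mpr ⟨hb.symm, fun he => ?_⟩
    rcases Sym2.eq_iff.mp he with ⟨h, -⟩ | ⟨h, -⟩
    exacts [hv ⟨b, h⟩, hw ⟨b, h⟩]
  exact hp.isAcyclic.not_reachable_deleteEdges h <| hva.reachable.trans <|
    (hp.consecutiveAdj.reachable_deleteEdges_of_notMem_range hv w a b).trans hbw.reachable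

lemma eq_of_adj_of_adj_of_notMem_range (hp : IsCaterpillarSpine G p) {u v w : V}
    (hv : v ∉ Set.range p) (hu : G.Adj u v) (hw : G.Adj w v) : u = w := by
  obtain ⟨a, rfl⟩ := (hp.mem_range_or_mem_range_of_adj hu).resolve_right hv
  obtain ⟨b, rfl⟩ := (hp.mem_range_or_mem_range_of_adj hw).resolve_right hv
  exact congrArg p (hp.eq_of_adj_of_notMem_range hv hu.symm hw.symm)

end IsCaterpillarSpine

section Labeling

variable [Fintype V]

variable (G p) in
open Classical in
noncomputable def spineLeaves (i : Fin n) : Finset V :=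
  {v | v ∉ Set.range p ∧ G.Adj v (p i)}

variable (G p) in
open Classical in
noncomputable def spineSlot (i : Fin n) (u : V) : ℕ :=
  if ∃ t : Fin n, p t = u ∧ t.val + 1 = i.val then 0
  else if h : u ∈ spineLeaves G p i then (spineLeaves G p i).equivFin ⟨u, h⟩ + 2
  else 1

variable (G p) in
open Classical in
noncomputable def caterpillarLabel (k : ℕ) (v : V) : ℕ :=
  if h : ∃ t, p t = v then spineLabel k h.choose
  else if h : ∃ i, G.Adj v (p i) then nbrLabel k h.choose (spineSlot G p h.choose v)
  else 0

lemma mem_spineLeaves {i : Fin n} {v : V} :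
    v ∈ spineLeaves G p i ↔ v ∉ Set.range p ∧ G.Adj v (p i) := by
  simp [spineLeaves]

lemma spineSlot_of_succ_eq {i t : Fin n} (h : t.val + 1 = i.val) : spineSlot G p i (p t) = 0 :=
  if_pos ⟨t, rfl, h⟩

lemma spineSlot_of_eq_succ (hinj : Function.Injective p) {i t : Fin n} (h : i.val + 1 = t.val) :
    spineSlot G p i (p t) = 1 := by
  have hprev : ¬ ∃ t' : Fin n, p t' = p t ∧ t'.val + 1 = i.val := by
    rintro ⟨t', ht', h'⟩
    rw [hinj ht'] at h'
    omega
  have hleaf : p t ∉ spineLeaves G p i := fun hm => (mem_spineLeaves.mp hm).1 ⟨t, rfl⟩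
  rw [spineSlot, if_neg hprev, dif_neg hleaf]

lemma spineSlot_of_mem {i : Fin n} {v : V} (hv : v ∈ spineLeaves G p i) :
    spineSlot G p i v = (spineLeaves G p i).equivFin ⟨v, hv⟩ + 2 := by
  have hprev : ¬ ∃ t : Fin n, p t = v ∧ t.val + 1 = i.val :=
    fun ⟨t, ht, _⟩ => (mem_spineLeaves.mp hv).1 ⟨t, ht⟩
  rw [spineSlot, if_neg hprev, dif_pos hv]

lemma caterpillarLabel_spine (hinj : Function.Injective p) (k : ℕ) (i : Fin n) :
    caterpillarLabel G p k (p i) = spineLabel k i := by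
  have h : ∃ t, p t = p i := ⟨i, rfl⟩
  rw [caterpillarLabel, dif_pos h, hinj h.choose_spec]

namespace IsCaterpillarSpine

lemma adj_cases (hp : IsCaterpillarSpine G p) {i : Fin n} {u : V} (hu : G.Adj u (p i)) :
    (∃ t : Fin n, u = p t ∧ t.val + 1 = i.val) ∨ (∃ t : Fin n, u = p t ∧ i.val + 1 = t.val) ∨
      u ∈ spineLeaves G p i := by
  by_cases hu' : u ∈ Set.range p
  · obtain ⟨t, rfl⟩ := hu'
    rcases hp.succ_eq_or_of_adj hu with h | h
    exacts [Or.inl ⟨t, rfl, h⟩, Or.inr (Or.inl ⟨t, rfl, h⟩)]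
  · exact Or.inr (Or.inr (mem_spineLeaves.mpr ⟨hu', hu⟩))

lemma isSlot_spineSlot (hp : IsCaterpillarSpine G p) {i : Fin n} {u : V} (hu : G.Adj u (p i)) :
    IsSlot n i #(spineLeaves G p i) (spineSlot G p i u) := by
  rcases hp.adj_cases hu with ⟨t, rfl, h⟩ | ⟨t, rfl, h⟩ | hm
  · rw [spineSlot_of_succ_eq h]
    exact ⟨fun _ => by omega, by simp, by omega⟩
  · rw [spineSlot_of_eq_succ hp.injective h]
    exact ⟨by simp, fun _ => h ▸ t.isLt, by omega⟩
  · rw [spineSlot_of_mem hm]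
    exact ⟨by simp, by simp, by simp⟩

lemma spineSlot_injOn (hp : IsCaterpillarSpine G p) (i : Fin n) :
    Set.InjOn (spineSlot G p i) (G.neighborSet (p i)) := by
  intro u hu w hw h
  rw [mem_neighborSet] at hu hw
  rcases hp.adj_cases hu.symm with ⟨t, rfl, ht⟩ | ⟨t, rfl, ht⟩ | hu <;>
  rcases hp.adj_cases hw.symm with ⟨t', rfl, ht'⟩ | ⟨t', rfl, ht'⟩ | hw <;>
  simp (disch := assumption) only [spineSlot_of_succ_eq, spineSlot_of_eq_succ hp.injective,
    spineSlot_of_mem] at h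
  all_goals first
  | omega
  | exact congrArg p (Fin.ext (by omega))
  | exact congrArg Subtype.val (Equiv.injective _ (Fin.ext (Nat.add_right_cancel h)))

lemma caterpillarLabel_of_adj (hp : IsCaterpillarSpine G p) (k : ℕ) {i : Fin n} {u : V}
    (hu : G.Adj u (p i)) : caterpillarLabel G p k u = nbrLabel k i (spineSlot G p i u) := by
  rcases hp.adj_cases hu with ⟨t, rfl, h⟩ | ⟨t, rfl, h⟩ | hm
  · rw [caterpillarLabel_spine hp.injective, spineSlot_of_succ_eq h, nbrLabel, ← h,
      Nat.add_sub_cancel]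
  · rw [caterpillarLabel_spine hp.injective, spineSlot_of_eq_succ hp.injective h, nbrLabel, h]
  · obtain ⟨hu', -⟩ := mem_spineLeaves.mp hm
    have h : ∃ j, G.Adj u (p j) := ⟨i, hu⟩
    rw [caterpillarLabel, dif_neg (by rintro ⟨t, rfl⟩; exact hu' ⟨t, rfl⟩), dif_pos h,
      hp.eq_of_adj_of_notMem_range hu' h.choose_spec hu]

lemma card_spineLeaves_add_le [DecidableRel G.Adj] (hp : IsCaterpillarSpine G p) (i : Fin n) :
    min i.val 1 + min (n - i.val - 1) 1 + #(spineLeaves G p i) ≤ G.degree (p i) := by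
  classical
  have hP := i.min_one_le_card_succ_eq
  have hN := i.min_one_le_card_eq_succ
  set P : Finset (Fin n) := {t | t.val + 1 = i.val}
  set N : Finset (Fin n) := {t | i.val + 1 = t.val}
  set f : Fin n ↪ V := ⟨p, hp.injective⟩
  have hsub : P.map f ∪ N.map f ∪ spineLeaves G p i ⊆ G.neighborFinset (p i) := by
    intro x hx
    simp only [mem_union, mem_map, mem_filter, mem_univ, true_and, P, N, f,
      Function.Embedding.coeFn_mk] at hx
    rw [mem_neighborFinset]
    rcases hx with (⟨t, ht, rfl⟩ | ⟨t, ht, rfl⟩) | hx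
    exacts [(hp.consecutiveAdj.adj_of_succ_eq ht).symm, hp.consecutiveAdj.adj_of_succ_eq ht,
      (mem_spineLeaves.mp hx).2.symm]
  have hPN : Disjoint (P.map f) (N.map f) := by
    simp only [Finset.disjoint_left, mem_map, mem_filter, mem_univ, true_and, P, N, f,
      Function.Embedding.coeFn_mk]
    rintro _ ⟨t, ht, rfl⟩ ⟨t', ht', h⟩
    rw [hp.injective h] at ht'
    omega
  have hL : Disjoint (P.map f ∪ N.map f) (spineLeaves G p i) := by
    refine Finset.disjoint_left.mpr fun x hx hxL => (mem_spineLeaves.mp hxL).1 ?_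
    simp only [mem_union, mem_map] at hx
    rcases hx with ⟨t, -, rfl⟩ | ⟨t, -, rfl⟩ <;> exact ⟨t, rfl⟩
  have := card_le_card hsub
  rw [card_union_of_disjoint hL, card_union_of_disjoint hPN, card_map, card_map,
    card_neighborFinset_eq_degree] at this
  omega

theorem isTotalDiffLabeling_caterpillarLabel [DecidableRel G.Adj]
    (hp : IsCaterpillarSpine G p) :
    IsTotalDiffLabeling G (G.maxDegree + 3) (caterpillarLabel G p (G.maxDegree + 3)) := by
  set k := G.maxDegree + 3
  set c := caterpillarLabel G p k with hc
  have hcap (i : Fin n) :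
      min i.val 1 + min (n - i.val - 1) 1 + #(spineLeaves G p i) + 3 ≤ k := by
    have := hp.card_spineLeaves_add_le i
    have := G.degree_le_maxDegree (p i)
    omega
  have hk5 (hn : 3 ≤ n) : 5 ≤ k := by
    have := hcap ⟨1, by omega⟩
    simp only [min_self, show min (n - 1 - 1) 1 = 1 by omega] at this
    omega
  have hnbr {i : Fin n} {u : V} (hu : G.Adj u (p i)) :
      (1 ≤ c u ∧ c u ≤ k) ∧ DiffCompatible (c u) (c (p i)) := by
    rw [hc, hp.caterpillarLabel_of_adj k hu, caterpillarLabel_spine hp.injective]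
    exact nbrLabel_mem_and_compatible (hp.isSlot_spineSlot hu) i.isLt (hcap i) hk5
  have hedge {u v : V} (h : G.Adj u v) : DiffCompatible (c u) (c v) := by
    rcases hp.mem_range_or_mem_range_of_adj h with ⟨i, rfl⟩ | ⟨i, rfl⟩
    exacts [(hnbr h.symm).2.symm, (hnbr h).2]
  refine ⟨fun v => ?_, fun u v h => (hedge h).1, fun u v h => (hedge h).2, ?_⟩
  · by_cases hv : v ∈ Set.range p
    · obtain ⟨i, rfl⟩ := hv
      rw [hc, caterpillarLabel_spine hp.injective]
      exact spineLabel_mem (by omega)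
    · obtain ⟨i, hi⟩ := hp.exists_adj_of_notMem_range v hv
      exact (hnbr hi).1
  · intro u v w huv hvw huw
    by_cases hv : v ∈ Set.range p
    · obtain ⟨i, rfl⟩ := hv
      rw [Nat.dist_comm (c (p i)), hc, hp.caterpillarLabel_of_adj k huv,
        hp.caterpillarLabel_of_adj k hvw.symm, caterpillarLabel_spine hp.injective]
      exact nbrLabel_dist_injective (hp.isSlot_spineSlot huv) (hp.isSlot_spineSlot hvw.symm)
        (hcap i) fun h => huw (hp.spineSlot_injOn i huv.symm hvw h)
    · exact absurd (hp.eq_of_adj_of_adj_of_notMem_range hv huv hvw.symm) huw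

end IsCaterpillarSpine

end Labeling

end SimpleGraph

/-- If `G` is a caterpillar with maximum degree `Δ`, then `Δ + 1 ≤ χ_td(G) ≤ Δ + 3`. -/
theorem tdChromatic_caterpillar {V : Type*} [Fintype V] (G : SimpleGraph V)
    [DecidableRel G.Adj] (hG : IsCaterpillar G) :
    G.maxDegree + 1 ≤ tdChromatic G ∧ tdChromatic G ≤ G.maxDegree + 3 := by
  obtain ⟨hT, n, p, hinj, hadj, hcov⟩ := hG
  have : Nonempty V := hT.connected.nonempty
  have hp : IsCaterpillarSpine G p := ⟨hT.isAcyclic, hinj, hadj, fun v hv =>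
    (hcov v).imp fun i h => h.resolve_left fun h => hv ⟨i, h.symm⟩⟩
  have hc := hp.isTotalDiffLabeling_caterpillarLabel
  exact ⟨hc.maxDegree_lt_tdChromatic, hc.tdChromatic_le⟩
end

section
/- For every integer Δ ≥ 2 and every integer h ≥ 2, the uniform full Δ-ary tree of height h satisfies ⌊(3Δ + 3)/2⌋ ≤ χ_td(T_{Δ,h}) ≤ 2Δ + 1. -/
open SimpleGraph

/-- `G` is a uniform full `Δ`-ary tree of height `h` rooted at `r`: a tree in which
every vertex is at distance at most `h` from `r`, every vertex at distance less than
`h` from `r` has degree `Δ`, and every vertex at distance exactly `h` from `r` is a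
leaf. -/
def IsUniformFullTree {V : Type*} [Fintype V] (G : SimpleGraph V) [DecidableRel G.Adj]
    (Δ h : ℕ) (r : V) : Prop :=
  G.IsTree ∧ (∀ v : V, G.dist r v ≤ h) ∧
    (∀ v : V, G.dist r v < h → G.degree v = Δ) ∧
    (∀ v : V, G.dist r v = h → G.degree v = 1)

/-!
Lower bound: at a vertex `v` of degree `d` the `d` edge differences are distinct, differ from
`c v` and are at most `max (c v - 1) (k - c v)`, so `d < c v` or `c v + d < k`. In `T_{Δ,h}` with
`h ≥ 2` the root and its `Δ` neighbours have degree `Δ`, so their labels are `Δ + 1` distinct values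
outside `[k - Δ, Δ]`, which forces `3Δ + 2 ≤ 2k`.

Upper bound, for every tree of maximum degree at most `Δ`: label the root `1` and proceed
outwards. From a label `a`, a child can be reached through any difference
`t ≤ max (a - 1) (k - a)`, getting the label `a + t` or `a - t`. For `k = 2Δ + 1` at least `Δ` of
these differences are admissible, one more than the children of a non-root vertex need besides
the difference towards its parent.
-/

open Finset

namespace IsTotalDiffLabeling

variable {V : Type*} {G : SimpleGraph V} {k : ℕ} {c : V → ℕ}

lemma injOn_dist_neighborSet (hc : IsTotalDiffLabeling G k c) (v : V) :
    Set.InjOn (fun u => Nat.dist (c v) (c u)) (G.neighborSet v) := by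
  intro x hx y hy hxy
  by_contra hne
  exact hc.2.2.2 x v y (G.adj_symm hx) hy hne (by rw [Nat.dist_comm]; exact hxy)

lemma injOn_neighborSet (hc : IsTotalDiffLabeling G k c) (v : V) :
    Set.InjOn c (G.neighborSet v) :=
  Set.InjOn.of_comp (g := Nat.dist (c v)) (hc.injOn_dist_neighborSet v)

variable [G.LocallyFinite]

lemma degree_lt_or_add_degree_lt (hc : IsTotalDiffLabeling G k c) (v : V) :
    G.degree v < c v ∨ c v + G.degree v < k := by
  set M := max (c v - 1) (k - c v)
  have hv := hc.1 v
  have hmaps : Set.MapsTo (fun u => Nat.dist (c v) (c u)) (G.neighborFinset v)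
      ((Icc 1 M).erase (c v)) := by
    intro u hu
    have hu : G.Adj v u := by simpa using hu
    have := hc.1 u
    have := hc.2.1 v u hu
    have := hc.2.2.1 v u hu
    simp only [coe_erase, coe_Icc, Set.mem_sdiff, Set.mem_Icc, Set.mem_singleton_iff, M]
    unfold Nat.dist at *
    omega
  have hcard := card_le_card_of_injOn _ hmaps (by simpa using hc.injOn_dist_neighborSet v)
  rw [card_neighborFinset_eq_degree, card_erase_eq_ite, Nat.card_Icc] at hcard
  split_ifs at hcard with h <;> simp only [mem_Icc, M] at h <;> omega

lemma three_mul_add_two_le (hc : IsTotalDiffLabeling G k c) {r : V} {Δ : ℕ}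
    (hr : Δ ≤ G.degree r) (hnbr : ∀ u, G.Adj r u → Δ ≤ G.degree u) : 3 * Δ + 2 ≤ 2 * k := by
  set L := Icc 1 (k - Δ - 1) ∪ Icc (Δ + 1) k
  have hL : ∀ v, Δ ≤ G.degree v → c v ∈ L := fun v hv => by
    have := hc.1 v
    have := hc.degree_lt_or_add_degree_lt v
    simp only [L, mem_union, mem_Icc]
    omega
  have hmaps : Set.MapsTo c (G.neighborFinset r) (L.erase (c r)) := fun u hu => by
    have hu : G.Adj r u := by simpa using hu
    exact mem_erase.2 ⟨(hc.2.1 r u hu).symm, hL u (hnbr u hu)⟩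
  have hcard := card_le_card_of_injOn c hmaps (by simpa using hc.injOn_neighborSet r)
  have hLcard : #L ≤ (k - Δ - 1) + (k - Δ) := (card_union_le _ _).trans (by simp)
  rw [card_neighborFinset_eq_degree, card_erase_of_mem (hL r hr)] at hcard
  have := hc.1 r
  omega

end IsTotalDiffLabeling

/-- The label of a child reached from the label `a` through the difference `t`. -/
def labelAtDiff (k a t : ℕ) : ℕ := if a + t ≤ k then a + t else a - t

def diffChoices (k a : ℕ) : Finset ℕ :=
  {t ∈ Icc 1 (max (a - 1) (k - a)) | t ≠ a ∧ t ≠ labelAtDiff k a t}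

lemma mem_diffChoices {k a t : ℕ} : t ∈ diffChoices k a ↔
    1 ≤ t ∧ t ≤ max (a - 1) (k - a) ∧ t ≠ a ∧ t ≠ labelAtDiff k a t := by
  simp [diffChoices, and_assoc]

lemma labelAtDiff_mem_Icc {k a t : ℕ} (ha : a ∈ Icc 1 k) (ht : t ∈ diffChoices k a) :
    labelAtDiff k a t ∈ Icc 1 k := by
  rw [mem_diffChoices] at ht
  rw [mem_Icc] at ha ⊢
  unfold labelAtDiff at *
  split_ifs at * <;> omega

lemma dist_labelAtDiff {k a t : ℕ} (ht : t ∈ diffChoices k a) :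
    Nat.dist a (labelAtDiff k a t) = t := by
  rw [mem_diffChoices] at ht
  unfold labelAtDiff Nat.dist at *
  split_ifs at * <;> omega

/-- All of `[1, Δ + 1]` but one value is admissible: the excluded one is `a` itself, or `a / 2`
when the child has to step down. -/
lemma le_card_diffChoices {Δ a : ℕ} (ha : a ∈ Icc 1 (2 * Δ + 1)) :
    Δ ≤ #(diffChoices (2 * Δ + 1) a) := by
  set e := if a ≤ Δ + 1 then a else a / 2
  have hsub : (Icc 1 (Δ + 1)).erase e ⊆ diffChoices (2 * Δ + 1) a := by
    intro t ht
    simp only [mem_erase, mem_Icc, e] at ht ha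
    rw [mem_diffChoices]
    unfold labelAtDiff
    split_ifs at * <;> omega
  calc Δ = #(Icc 1 (Δ + 1)) - 1 := by simp
    _ ≤ #((Icc 1 (Δ + 1)).erase e) := pred_card_le_card_erase
    _ ≤ _ := card_le_card hsub

/-- An injection of `s` into `t`, whenever there is one. -/
noncomputable def injInto {α β : Type*} [Nonempty β] (s : Finset α) (t : Finset β) : α → β :=
  Classical.epsilon fun f => Set.MapsTo f s t ∧ Set.InjOn f s

lemma injInto_spec {α β : Type*} [Nonempty β] {s : Finset α} {t : Finset β} (h : #s ≤ #t) :
    Set.MapsTo (injInto s t) s t ∧ Set.InjOn (injInto s t) s := by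
  obtain ⟨f, hf⟩ := s.finite_toSet.exists_injOn_of_encard_le (t := (t : Set β))
    (by simpa [Set.encard_coe_eq_coe_finsetCard] using h)
  exact Classical.epsilon_spec (p := fun f : α → β => Set.MapsTo f s t ∧ Set.InjOn f s)
    ⟨f, fun x hx => hf.1 hx, hf.2⟩

namespace SimpleGraph

variable {V : Type*} {G : SimpleGraph V} {r u v w p : V}

lemma exists_adj_dist_add_one_eq (hv : G.dist r v ≠ 0) :
    ∃ u, G.Adj u v ∧ G.dist r u + 1 = G.dist r v := by
  obtain ⟨q, hq⟩ := exists_walk_of_dist_ne_zero hv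
  have hnil : ¬q.Nil := by
    rw [← Walk.length_eq_zero_iff]
    omega
  have hadj := q.adj_penultimate hnil
  have hle : G.dist r q.penultimate ≤ q.length - 1 := q.length_dropLast ▸ dist_le q.dropLast
  have htri := hadj.reachable.dist_triangle_right r
  rw [dist_eq_one_iff_adj.2 hadj] at htri
  refine ⟨q.penultimate, hadj, ?_⟩
  omega

/-- A neighbour of `v` one step closer to `r` (in a tree, the only one), or `r` if there is none. -/
noncomputable def parent (G : SimpleGraph V) (r v : V) : V :=
  if h : G.dist r v = 0 then r else (exists_adj_dist_add_one_eq h).choose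

lemma parent_spec (hv : G.dist r v ≠ 0) :
    G.Adj (parent G r v) v ∧ G.dist r (parent G r v) + 1 = G.dist r v := by
  rw [parent, dif_neg hv]
  exact (exists_adj_dist_add_one_eq hv).choose_spec

lemma dist_parent_le (r v : V) : G.dist r (parent G r v) ≤ G.dist r v := by
  by_cases hv : G.dist r v = 0
  · simp [parent, hv]
  · have := (parent_spec hv).2
    omega

lemma parent_of_dist_eq_zero (hv : G.dist r v = 0) : parent G r v = r :=
  dif_pos hv

lemma IsTree.eq_of_dist_add_one_eq (hT : G.IsTree) (hu : G.Adj u v) (hw : G.Adj w v)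
    (hdu : G.dist r u + 1 = G.dist r v) (hdw : G.dist r w + 1 = G.dist r v) : u = w := by
  obtain ⟨p, -, hp⟩ := hT.connected.exists_path_of_dist r u
  obtain ⟨q, -, hq⟩ := hT.connected.exists_path_of_dist r w
  have hpq := (hT.existsUnique_path r v).unique
    ((p.concat hu).isPath_of_length_eq_dist (by simp [hp, hdu]))
    ((q.concat hw).isPath_of_length_eq_dist (by simp [hq, hdw]))
  simpa using congrArg Walk.penultimate hpq

lemma IsTree.parent_eq (hT : G.IsTree) (hu : G.Adj u v) (hd : G.dist r u + 1 = G.dist r v) :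
    parent G r v = u :=
  have hp := parent_spec (by omega : G.dist r v ≠ 0)
  hT.eq_of_dist_add_one_eq hp.1 hu hp.2 hd

variable [G.LocallyFinite]

noncomputable def children (G : SimpleGraph V) [G.LocallyFinite] (r p : V) : Finset V :=
  {v ∈ G.neighborFinset p | G.dist r p + 1 = G.dist r v}

lemma mem_children : v ∈ children G r p ↔ G.Adj p v ∧ G.dist r p + 1 = G.dist r v := by
  simp [children]

lemma IsTree.parent_eq_of_mem_children (hT : G.IsTree) (hv : v ∈ children G r p) :
    parent G r v = p :=
  hT.parent_eq (mem_children.1 hv).1 (mem_children.1 hv).2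

lemma IsTree.eq_parent_or_mem_children (hT : G.IsTree) (hu : G.Adj v u) :
    u = parent G r v ∨ u ∈ children G r v := by
  rcases hT.dist_eq_dist_add_one_of_adj r hu with hd | hd
  · exact .inl (hT.parent_eq hu.symm hd.symm).symm
  · exact .inr (mem_children.2 ⟨hu, hd.symm⟩)

lemma card_children_le_degree : #(children G r v) ≤ G.degree v := by
  rw [← card_neighborFinset_eq_degree]
  exact card_le_card (filter_subset _ _)

lemma mem_children_parent (hv : G.dist r v ≠ 0) : v ∈ children G r (parent G r v) :=
  mem_children.2 (parent_spec hv)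

lemma card_children_lt_degree (hv : G.dist r v ≠ 0) : #(children G r v) < G.degree v := by
  obtain ⟨hadj, hd⟩ := parent_spec hv
  rw [← card_neighborFinset_eq_degree]
  refine card_lt_card (filter_ssubset.2 ⟨parent G r v, by simpa using hadj.symm, ?_⟩)
  omega

variable {k Δ : ℕ}

noncomputable def greedyLabel (G : SimpleGraph V) [G.LocallyFinite] (r : V) (k : ℕ) (v : V) :
    ℕ :=
  if G.dist r v = 0 then 1 else
    labelAtDiff k (greedyLabel G r k (parent G r v))
      (injInto (children G r (parent G r v))
        ((diffChoices k (greedyLabel G r k (parent G r v))).erase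
          (Nat.dist (greedyLabel G r k (parent G r v))
            (greedyLabel G r k (parent G r (parent G r v))))) v)
termination_by G.dist r v
decreasing_by
  all_goals have := (parent_spec ‹_›).2
  · omega
  · have := dist_parent_le (G := G) r (parent G r v)
    omega

/-- At the root, which is its own parent, the erased difference is `0`, which is not admissible
anyway. -/
noncomputable def availableDiffs (G : SimpleGraph V) [G.LocallyFinite] (r : V) (k : ℕ) (p : V) :
    Finset ℕ :=
  (diffChoices k (greedyLabel G r k p)).erase
    (Nat.dist (greedyLabel G r k p) (greedyLabel G r k (parent G r p)))

lemma greedyLabel_of_dist_eq_zero (hv : G.dist r v = 0) : greedyLabel G r k v = 1 := by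
  rw [greedyLabel, if_pos hv]

lemma greedyLabel_of_dist_ne_zero (hv : G.dist r v ≠ 0) :
    greedyLabel G r k v = labelAtDiff k (greedyLabel G r k (parent G r v))
      (injInto (children G r (parent G r v)) (availableDiffs G r k (parent G r v)) v) := by
  rw [greedyLabel, if_neg hv]
  rfl

lemma IsTree.greedyLabel_of_mem_children (hT : G.IsTree) (hv : v ∈ children G r p) :
    greedyLabel G r k v =
      labelAtDiff k (greedyLabel G r k p) (injInto (children G r p) (availableDiffs G r k p) v) := by
  have hv' : G.dist r v ≠ 0 := by
    have := (mem_children.1 hv).2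
    omega
  rw [greedyLabel_of_dist_ne_zero hv', hT.parent_eq_of_mem_children hv]

lemma card_children_le_card_availableDiffs (hdeg : ∀ v, G.degree v ≤ Δ)
    (hp : greedyLabel G r (2 * Δ + 1) p ∈ Icc 1 (2 * Δ + 1)) :
    #(children G r p) ≤ #(availableDiffs G r (2 * Δ + 1) p) := by
  have hchoices := le_card_diffChoices hp
  have hdegp := hdeg p
  by_cases hpr : G.dist r p = 0
  · have h1 : greedyLabel G r (2 * Δ + 1) p = 1 := greedyLabel_of_dist_eq_zero hpr
    have h0 : 0 ∉ diffChoices (2 * Δ + 1) 1 := by simp [mem_diffChoices]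
    rw [availableDiffs, parent_of_dist_eq_zero hpr, h1, greedyLabel_of_dist_eq_zero dist_self,
      Nat.dist_self, erase_eq_of_notMem h0]
    rw [h1] at hchoices
    have := card_children_le_degree (G := G) (r := r) (v := p)
    omega
  · have := card_children_lt_degree hpr
    have := pred_card_le_card_erase (s := diffChoices (2 * Δ + 1) (greedyLabel G r (2 * Δ + 1) p))
      (a := Nat.dist (greedyLabel G r (2 * Δ + 1) p) (greedyLabel G r (2 * Δ + 1) (parent G r p)))
    rw [availableDiffs]
    omega

lemma injInto_mem_availableDiffs (hdeg : ∀ v, G.degree v ≤ Δ)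
    (hp : greedyLabel G r (2 * Δ + 1) p ∈ Icc 1 (2 * Δ + 1)) (hv : v ∈ children G r p) :
    injInto (children G r p) (availableDiffs G r (2 * Δ + 1) p) v ∈
      availableDiffs G r (2 * Δ + 1) p :=
  (injInto_spec (card_children_le_card_availableDiffs hdeg hp)).1 hv

lemma greedyLabel_mem_Icc (hdeg : ∀ v, G.degree v ≤ Δ) (v : V) :
    greedyLabel G r (2 * Δ + 1) v ∈ Icc 1 (2 * Δ + 1) := by
  induction hn : G.dist r v using Nat.strong_induction_on generalizing v with
  | _ n ih =>
  by_cases hv : G.dist r v = 0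
  · simp [greedyLabel_of_dist_eq_zero hv]
  have hp := ih _ (by have := (parent_spec hv).2; omega) (parent G r v) rfl
  rw [greedyLabel_of_dist_ne_zero hv]
  exact labelAtDiff_mem_Icc hp
    (mem_of_mem_erase (injInto_mem_availableDiffs hdeg hp (mem_children_parent hv)))

lemma IsTree.mem_children_or_mem_children (hT : G.IsTree) (huv : G.Adj u v) :
    v ∈ children G r u ∨ u ∈ children G r v := by
  rcases hT.dist_eq_dist_add_one_of_adj r huv with hd | hd
  · exact .inr (mem_children.2 ⟨huv.symm, hd.symm⟩)
  · exact .inl (mem_children.2 ⟨huv, hd.symm⟩)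

lemma IsTree.dist_greedyLabel_of_mem_children (hT : G.IsTree) (hdeg : ∀ v, G.degree v ≤ Δ)
    (hv : v ∈ children G r p) :
    Nat.dist (greedyLabel G r (2 * Δ + 1) p) (greedyLabel G r (2 * Δ + 1) v) =
      injInto (children G r p) (availableDiffs G r (2 * Δ + 1) p) v := by
  have hp := greedyLabel_mem_Icc (r := r) hdeg p
  rw [hT.greedyLabel_of_mem_children hv]
  exact dist_labelAtDiff (mem_of_mem_erase (injInto_mem_availableDiffs hdeg hp hv))

lemma IsTree.dist_greedyLabel_mem_availableDiffs (hT : G.IsTree) (hdeg : ∀ v, G.degree v ≤ Δ)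
    (hv : v ∈ children G r p) :
    Nat.dist (greedyLabel G r (2 * Δ + 1) p) (greedyLabel G r (2 * Δ + 1) v) ∈
      availableDiffs G r (2 * Δ + 1) p := by
  rw [hT.dist_greedyLabel_of_mem_children hdeg hv]
  exact injInto_mem_availableDiffs hdeg (greedyLabel_mem_Icc hdeg p) hv

lemma IsTree.injOn_dist_greedyLabel_children (hT : G.IsTree) (hdeg : ∀ v, G.degree v ≤ Δ)
    (p : V) :
    Set.InjOn (fun v => Nat.dist (greedyLabel G r (2 * Δ + 1) p) (greedyLabel G r (2 * Δ + 1) v))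
      (children G r p) := by
  intro v hv w hw hvw
  simp only [hT.dist_greedyLabel_of_mem_children hdeg (mem_coe.1 hv),
    hT.dist_greedyLabel_of_mem_children hdeg (mem_coe.1 hw)] at hvw
  exact (injInto_spec (card_children_le_card_availableDiffs hdeg
    (greedyLabel_mem_Icc hdeg p))).2 hv hw hvw

lemma IsTree.dist_greedyLabel_ne_of_mem_children (hT : G.IsTree) (hdeg : ∀ v, G.degree v ≤ Δ)
    (hv : v ∈ children G r p) :
    let c := greedyLabel G r (2 * Δ + 1)
    0 < Nat.dist (c p) (c v) ∧ Nat.dist (c p) (c v) ≠ c p ∧ Nat.dist (c p) (c v) ≠ c v := by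
  intro c
  have hmem := mem_diffChoices.1 (mem_of_mem_erase (hT.dist_greedyLabel_mem_availableDiffs hdeg hv))
  have hcv : c v = labelAtDiff (2 * Δ + 1) (c p) (Nat.dist (c p) (c v)) := by
    rw [hT.dist_greedyLabel_of_mem_children hdeg hv]
    exact hT.greedyLabel_of_mem_children hv
  exact ⟨hmem.1, hmem.2.2.1, fun h => hmem.2.2.2 (h.trans hcv)⟩

theorem IsTree.isTotalDiffLabeling_greedyLabel (hT : G.IsTree) (r : V)
    (hdeg : ∀ v, G.degree v ≤ Δ) :
    IsTotalDiffLabeling G (2 * Δ + 1) (greedyLabel G r (2 * Δ + 1)) := by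
  set c := greedyLabel G r (2 * Δ + 1)
  have hedge : ∀ u v, G.Adj u v →
      0 < Nat.dist (c u) (c v) ∧ Nat.dist (c u) (c v) ≠ c u ∧ Nat.dist (c u) (c v) ≠ c v := by
    intro u v huv
    rcases hT.mem_children_or_mem_children (r := r) huv with h | h
    · exact hT.dist_greedyLabel_ne_of_mem_children hdeg h
    · obtain ⟨hpos, hv, hu⟩ := hT.dist_greedyLabel_ne_of_mem_children hdeg h
      rw [Nat.dist_comm]
      exact ⟨hpos, hu, hv⟩
  have hparent : ∀ {v w}, w ∈ children G r v →
      Nat.dist (c (parent G r v)) (c v) ≠ Nat.dist (c v) (c w) := by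
    intro v w hw h
    have := hT.dist_greedyLabel_mem_availableDiffs hdeg hw
    rw [availableDiffs, ← h, Nat.dist_comm] at this
    exact notMem_erase _ _ this
  refine ⟨fun v => mem_Icc.1 (greedyLabel_mem_Icc hdeg v),
    fun u v huv h => (hedge u v huv).1.ne' (by rw [h, Nat.dist_self]),
    fun u v huv => (hedge u v huv).2, fun u v w huv hvw huw => ?_⟩
  rcases hT.eq_parent_or_mem_children (r := r) huv.symm with rfl | hu <;>
    rcases hT.eq_parent_or_mem_children (r := r) hvw with rfl | hw
  · exact absurd rfl huw
  · exact hparent hw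
  · rw [Nat.dist_comm (c u), Nat.dist_comm (c v) (c (parent G r v))]
    exact (hparent hu).symm
  · rw [Nat.dist_comm]
    exact fun h => huw (hT.injOn_dist_greedyLabel_children hdeg v hu hw h)

end SimpleGraph

lemma tdChromatic_le {V : Type*} {G : SimpleGraph V} {k : ℕ} {c : V → ℕ}
    (hc : IsTotalDiffLabeling G k c) : tdChromatic G ≤ k :=
  Nat.sInf_le ⟨c, hc⟩

lemma exists_isTotalDiffLabeling_tdChromatic {V : Type*} {G : SimpleGraph V}
    (h : ∃ k c, IsTotalDiffLabeling G k c) : ∃ c, IsTotalDiffLabeling G (tdChromatic G) c :=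
  Nat.sInf_mem h

/-- For `Δ ≥ 2` and `h ≥ 2`, the uniform full `Δ`-ary tree of height `h` satisfies
`⌊(3Δ + 3) / 2⌋ ≤ χ_td(T_{Δ,h}) ≤ 2Δ + 1`. -/
theorem tdChromatic_uniformFullTree {V : Type*} [Fintype V]
    (G : SimpleGraph V) [DecidableRel G.Adj] (Δ h : ℕ) (hΔ : 2 ≤ Δ) (hh : 2 ≤ h)
    (r : V) (hG : IsUniformFullTree G Δ h r) :
    (3 * Δ + 3) / 2 ≤ tdChromatic G ∧ tdChromatic G ≤ 2 * Δ + 1 := by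
  obtain ⟨hT, hdist, hinner, hleaf⟩ := hG
  have hdeg : ∀ v, G.degree v ≤ Δ := fun v => by
    rcases (hdist v).lt_or_eq with hv | hv
    · exact (hinner v hv).le
    · rw [hleaf v hv]
      omega
  have hgreedy := hT.isTotalDiffLabeling_greedyLabel r hdeg
  refine ⟨?_, tdChromatic_le hgreedy⟩
  obtain ⟨c, hc⟩ := exists_isTotalDiffLabeling_tdChromatic ⟨_, _, hgreedy⟩
  have := hc.three_mul_add_two_le (hinner r (by rw [dist_self]; omega)).ge
    fun u hu => (hinner u (by rw [dist_eq_one_iff_adj.2 hu]; omega)).ge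
  omega
end
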